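/- arXiv:1510.07248 — 3 statements merged into one kernel-verified Lean document; each statement's English description precedes it below -/
import Mathlib

section
/- For every real c ≥ 3^{4/3}/2 and every (q,p) ∈ (ℝ²∖{(0,0)})×ℝ² with |q₁| ≤ 3^{-1/3} and H_H(q,p) = −c, one has H_R(q,p) < −2^{2/3}. (This is the core inequality proving that every energy hypersurface of the regularized Hill's lunar problem at or below the critical value −3^{4/3}/2 is contained in the rotating Kepler domain of energy −2^{2/3}, Theorem 5.3 / Theorem B(1).) -/
/-- The rotating Kepler Hamiltonian `H_R(q,p) = ½|p|² − 1/|q| + q₁p₂ − q₂p₁`. -/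
noncomputable def HR (x : (ℝ × ℝ) × (ℝ × ℝ)) : ℝ :=
  (1/2) * (x.2.1^2 + x.2.2^2) - 1 / Real.sqrt (x.1.1^2 + x.1.2^2)
    + x.1.1 * x.2.2 - x.1.2 * x.2.1

/-- Hill's lunar Hamiltonian `H_H = H_R − q₁² + ½q₂²`. -/
noncomputable def HH (x : (ℝ × ℝ) × (ℝ × ℝ)) : ℝ :=
  HR x - x.1.1^2 + (1/2) * x.1.2^2

/-- Core inequality of Theorem 5.3 / Theorem B(1): for `c ≥ 3^{4/3}/2` and
`(q,p)` with `q ≠ 0`, `|q₁| ≤ 3^{-1/3}` and `H_H(q,p) = −c`, one has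
`H_R(q,p) < −2^{2/3}`. -/
theorem hill_in_rotating_kepler_below_hekuba (c : ℝ)
    (hc : (3:ℝ) ^ ((4:ℝ)/3) / 2 ≤ c) (q p : ℝ × ℝ) (hq : q ≠ 0)
    (hq1 : |q.1| ≤ (3:ℝ) ^ (-(1:ℝ)/3)) (hH : HH (q, p) = -c) :
    HR (q, p) < -((2:ℝ) ^ ((2:ℝ)/3)) := by
  set s : ℝ := (2:ℝ) ^ ((2:ℝ)/3) with hs_def
  set t : ℝ := (3:ℝ) ^ ((2:ℝ)/3) with ht_def
  have hs : (0:ℝ) < s := Real.rpow_pos_of_pos (by norm_num) _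
  have ht : (0:ℝ) < t := Real.rpow_pos_of_pos (by norm_num) _
  have hs3 : s ^ 3 = 4 := by
    rw [hs_def, ← Real.rpow_natCast ((2:ℝ) ^ ((2:ℝ)/3)) 3,
      ← Real.rpow_mul (by norm_num : (0:ℝ) ≤ 2)]
    norm_num
  have ht3 : t ^ 3 = 9 := by
    rw [ht_def, ← Real.rpow_natCast ((3:ℝ) ^ ((2:ℝ)/3)) 3,
      ← Real.rpow_mul (by norm_num : (0:ℝ) ≤ 3)]
    norm_num
  -- `3^{4/3} = t^2`
  have ht2 : (3:ℝ) ^ ((4:ℝ)/3) = t ^ 2 := by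
    rw [ht_def, ← Real.rpow_natCast ((3:ℝ) ^ ((2:ℝ)/3)) 2,
      ← Real.rpow_mul (by norm_num : (0:ℝ) ≤ 3)]
    norm_num
  -- `q₁² ≤ 3^{-2/3} = 1/t`
  have hq1sq : q.1 ^ 2 * t ≤ 1 := by
    have h1 : q.1 ^ 2 ≤ ((3:ℝ) ^ (-(1:ℝ)/3)) ^ 2 := by
      have := abs_nonneg q.1
      nlinarith [sq_abs q.1]
    have h2 : ((3:ℝ) ^ (-(1:ℝ)/3)) ^ 2 * t = 1 := by
      rw [ht_def, ← Real.rpow_natCast ((3:ℝ) ^ (-(1:ℝ)/3)) 2,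
        ← Real.rpow_mul (by norm_num : (0:ℝ) ≤ 3),
        ← Real.rpow_add (by norm_num : (0:ℝ) < 3)]
      norm_num
    nlinarith
  -- key numeric inequality: `2 s t < 7`
  have key : 2 * s * t < 7 := by
    have hcube : (2 * s * t) ^ 3 < 7 ^ 3 := by
      have : (2 * s * t) ^ 3 = 8 * (s ^ 3) * (t ^ 3) := by ring
      rw [this, hs3, ht3]; norm_num
    exact lt_of_pow_lt_pow_left₀ 3 (by norm_num) hcube
  -- express HR from HH
  have hHR : HR (q, p) = -c + q.1 ^ 2 - (1/2) * q.2 ^ 2 := by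
    have : HH (q, p) = HR (q, p) - q.1 ^ 2 + (1/2) * q.2 ^ 2 := rfl
    rw [this] at hH; linarith
  rw [hHR]
  rw [ht2] at hc
  nlinarith [sq_nonneg q.2, mul_pos hs ht, sq_nonneg q.1]
end

section
/- For every integer P ≥ 2, set c_H^P = (2P+8−√((P+1)(P+9)))/(2(P+1)^{1/3}) and c_R^P = (P+3)/(2(P+1)^{1/3}). If (q,p) ∈ (ℝ²∖{(0,0)})×ℝ² satisfies |q₁| ≤ 3^{-1/3} and H_H(q,p) = −c_H^P, then H_R(q,p) ≤ −c_R^P. (This is the core inequality proving the inclusion M_H^{c_H^P} ⊂ M_R^{c_R^P} of Theorem 5.5 / Theorem B(2).) -/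
open Real

lemma HR_eq_HH_add (q p : ℝ × ℝ) : HR (q, p) = HH (q, p) + q.1 ^ 2 - q.2 ^ 2 / 2 := by
  unfold HH; ring

lemma neg_one_div_sub_le_HH (q p : ℝ × ℝ) :
    -(1 / √(q.1 ^ 2 + q.2 ^ 2)) - 3 / 2 * q.1 ^ 2 ≤ HH (q, p) := by
  have hsquare : HH (q, p) = ((p.1 - q.2) ^ 2 + (p.2 + q.1) ^ 2) / 2
      - 1 / √(q.1 ^ 2 + q.2 ^ 2) - 3 / 2 * q.1 ^ 2 := by
    unfold HH HR; ring
  rw [hsquare]; linarith [sq_nonneg (p.1 - q.2), sq_nonneg (p.2 + q.1)]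

/-- Minus Hill's effective potential `−1/|q| − 3/2 q₁²` on the `q₁`-axis; its minimum is at
`3^{-1/3}`. -/
noncomputable def axisPotential (v : ℝ) : ℝ := 3 / 2 * v ^ 2 + 1 / v

lemma rpow_neg_one_third_pow_three : ((3 : ℝ) ^ (-(1 : ℝ) / 3)) ^ 3 = 1 / 3 := by
  rw [← rpow_natCast, ← rpow_mul (by norm_num)]; norm_num

lemma strictAntiOn_axisPotential :
    StrictAntiOn axisPotential (Set.Ioc 0 ((3 : ℝ) ^ (-(1 : ℝ) / 3))) := by
  rintro e ⟨he, heN⟩ v ⟨hv, hvN⟩ hev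
  set N := (3 : ℝ) ^ (-(1 : ℝ) / 3)
  have hcube : e * v * (e + v) < 2 / 3 := by
    have hN := rpow_neg_one_third_pow_three
    have heN' : e < N := hev.trans_le hvN
    calc e * v * (e + v) < N * v * (N + v) := by gcongr
      _ ≤ N * N * (N + N) := by gcongr
      _ = 2 / 3 := by linear_combination 2 * hN
  have hdiff : axisPotential e - axisPotential v
      = (v - e) * (1 - 3 / 2 * (e * v * (e + v))) / (e * v) := by
    unfold axisPotential; field_simp; ring
  have hpos : 0 < (v - e) * (1 - 3 / 2 * (e * v * (e + v))) / (e * v) :=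
    div_pos (mul_pos (by linarith) (by linarith)) (by positivity)
  linarith

lemma sq_fst_le_of_HH_eq {e : ℝ} (he : 0 < e) (heN : e ≤ (3 : ℝ) ^ (-(1 : ℝ) / 3))
    {q p : ℝ × ℝ} (hq1 : |q.1| ≤ (3 : ℝ) ^ (-(1 : ℝ) / 3))
    (hH : HH (q, p) = -axisPotential e) :
    q.1 ^ 2 ≤ e ^ 2 := by
  rw [← sq_abs q.1]
  by_contra! hlt
  have hev : e < |q.1| := by nlinarith [abs_nonneg q.1]
  have hq1pos : 0 < |q.1| := he.trans hev
  have hnorm : |q.1| ≤ √(q.1 ^ 2 + q.2 ^ 2) := by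
    rw [← sqrt_sq_eq_abs]; exact sqrt_le_sqrt (by nlinarith [sq_nonneg q.2])
  have hbound : -axisPotential |q.1| ≤ HH (q, p) := by
    have hHH := neg_one_div_sub_le_HH q p
    have hinv := one_div_le_one_div_of_le hq1pos hnorm
    unfold axisPotential; rw [sq_abs]; linarith
  have hdecr := strictAntiOn_axisPotential ⟨he, heN⟩ ⟨hq1pos, hq1⟩ hev
  linarith

lemma HR_le_of_HH_eq {e : ℝ} (he : 0 < e) (heN : e ≤ (3 : ℝ) ^ (-(1 : ℝ) / 3))
    {q p : ℝ × ℝ} (hq1 : |q.1| ≤ (3 : ℝ) ^ (-(1 : ℝ) / 3))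
    (hH : HH (q, p) = -axisPotential e) :
    HR (q, p) ≤ -(axisPotential e - e ^ 2) := by
  rw [HR_eq_HH_add, hH]
  linarith [sq_fst_le_of_HH_eq he heN hq1 hH, sq_nonneg q.2]

noncomputable def levelRadius (P : ℝ) : ℝ :=
  (√(P + 9) - √(P + 1)) / (2 * (P + 1) ^ ((1 : ℝ) / 6))

lemma rpow_one_sixth_pow {x : ℝ} (hx : 0 ≤ x) (k : ℕ) :
    (x ^ ((1 : ℝ) / 6)) ^ k = x ^ ((k : ℝ) / 6) := by
  rw [← rpow_natCast, ← rpow_mul hx]; ring_nf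

lemma exists_rpow_one_sixth {x : ℝ} (hx : 0 < x) :
    ∃ w : ℝ, 0 < w ∧ x ^ ((1 : ℝ) / 6) = w ∧ x ^ ((1 : ℝ) / 3) = w ^ 2 ∧ √x = w ^ 3 ∧
      x = w ^ 6 := by
  refine ⟨_, rpow_pos_of_pos hx _, rfl, ?_, ?_, ?_⟩ <;>
    rw [rpow_one_sixth_pow hx.le] <;> norm_num [sqrt_eq_rpow]

lemma levelRadius_pos {P : ℝ} (hP : -1 < P) : 0 < levelRadius P := by
  unfold levelRadius
  have hsqrt := sqrt_lt_sqrt (by linarith) (by linarith : P + 1 < P + 9)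
  have hw := rpow_pos_of_pos (by linarith : 0 < P + 1) ((1 : ℝ) / 6)
  exact div_pos (by linarith) (by positivity)

lemma levelRadius_le {P : ℝ} (hP : 2 ≤ P) : levelRadius P ≤ (3 : ℝ) ^ (-(1 : ℝ) / 3) := by
  obtain ⟨w, hw, hw1, -, hw3, hw6⟩ := exists_rpow_one_sixth (by linarith : 0 < P + 1)
  have hβ : √(P + 9) ^ 2 = w ^ 6 + 8 := by rw [sq_sqrt (by linarith)]; linarith
  have hβ0 : 0 ≤ √(P + 9) := sqrt_nonneg _
  unfold levelRadius
  rw [hw1, hw3]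
  generalize √(P + 9) = β at hβ hβ0
  have hu : 17 / 10 ≤ w ^ 3 := by nlinarith [pow_pos hw 3]
  have hβ5 : 5 ≤ β + w ^ 3 := by nlinarith
  have hd0 : 0 ≤ β - w ^ 3 := by nlinarith
  have hd : β - w ^ 3 ≤ 8 / 5 := by nlinarith
  rw [← pow_le_pow_iff_left₀ (by positivity) (by positivity) three_ne_zero,
    rpow_neg_one_third_pow_three, div_pow, div_le_iff₀ (by positivity)]
  calc (β - w ^ 3) ^ 3 ≤ (8 / 5) ^ 3 := by gcongr
    _ ≤ 1 / 3 * (2 * w) ^ 3 := by nlinarith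

lemma axisPotential_levelRadius {P : ℝ} (hP : -1 < P) :
    axisPotential (levelRadius P) =
        (2 * P + 8 - √((P + 1) * (P + 9))) / (2 * (P + 1) ^ ((1 : ℝ) / 3)) ∧
      axisPotential (levelRadius P) - levelRadius P ^ 2 =
        (P + 3) / (2 * (P + 1) ^ ((1 : ℝ) / 3)) := by
  have h0 : 0 < P + 1 := by linarith
  obtain ⟨w, hw, hw1, hw2, hw3, hw6⟩ := exists_rpow_one_sixth h0
  have hβw : √(P + 9) - w ^ 3 ≠ 0 := by
    rw [← hw3]; exact sub_ne_zero.mpr (sqrt_lt_sqrt h0.le (by linarith)).ne'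
  have hβ : √(P + 9) ^ 2 = w ^ 6 + 8 := by rw [sq_sqrt (by linarith)]; linarith
  unfold levelRadius axisPotential
  rw [sqrt_mul h0.le, hw1, hw2, hw3]
  generalize √(P + 9) = β at hβ hβw ⊢
  obtain rfl : P = w ^ 6 - 1 := by linarith
  constructor
  · field_simp
    linear_combination (3 * β - 5 * w ^ 3) * hβ
  · field_simp
    linear_combination (β - 3 * w ^ 3) * hβ

theorem hill_in_rotating_kepler_cHP_general (P : ℕ) (hP : 2 ≤ P)
    (q p : ℝ × ℝ) (hq1 : |q.1| ≤ (3:ℝ) ^ (-(1:ℝ)/3))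
    (hH : HH (q, p) =
      -((2*(P:ℝ)+8 - Real.sqrt (((P:ℝ)+1) * ((P:ℝ)+9))) /
        (2 * ((P:ℝ)+1) ^ ((1:ℝ)/3)))) :
    HR (q, p) ≤ -(((P:ℝ)+3) / (2 * ((P:ℝ)+1) ^ ((1:ℝ)/3))) := by
  have hP' : (2 : ℝ) ≤ P := by exact_mod_cast hP
  obtain ⟨hcH, hcR⟩ := axisPotential_levelRadius (by linarith : (-1 : ℝ) < P)
  rw [← hcH] at hH
  rw [← hcR]
  exact HR_le_of_HH_eq (levelRadius_pos (by linarith)) (levelRadius_le hP') hq1 hH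

/-- Core inequality of Theorem 5.5 / Theorem B(2): for `P ≥ 2`, with
`c_H^P = (2P+8−√((P+1)(P+9)))/(2(P+1)^{1/3})` and `c_R^P = (P+3)/(2(P+1)^{1/3})`,
if `q ≠ 0`, `|q₁| ≤ 3^{-1/3}` and `H_H(q,p) = −c_H^P`, then `H_R(q,p) ≤ −c_R^P`. -/
theorem hill_in_rotating_kepler_cHP (P : ℕ) (hP : 2 ≤ P)
    (q p : ℝ × ℝ) (hq : q ≠ 0) (hq1 : |q.1| ≤ (3:ℝ) ^ (-(1:ℝ)/3))
    (hH : HH (q, p) =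
      -((2*(P:ℝ)+8 - Real.sqrt (((P:ℝ)+1) * ((P:ℝ)+9))) /
        (2 * ((P:ℝ)+1) ^ ((1:ℝ)/3)))) :
    HR (q, p) ≤ -(((P:ℝ)+3) / (2 * ((P:ℝ)+1) ^ ((1:ℝ)/3))) :=
  hill_in_rotating_kepler_cHP_general P hP q p hq1 hH
end

section
/- For every real c ≥ 3^{4/3}/2 and every (q,p) ∈ ℝ²×ℝ² with 0 < |q| ≤ 1 and H_R(q,p) = −(c + 1/(2c²)), one has |q| ≤ 1/c and H_H(q,p) ≤ −c. (This is the core inequality, together with its Claim |q| ≤ 1/c, proving the inclusion M_R^{c+1/(2c²)} ⊂ M_H^c of Proposition 5.7 / Theorem B(3).) -/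
set_option maxHeartbeats 1000000 in
/-- Core inequality of Proposition 5.7 / Theorem B(3): for `c ≥ 3^{4/3}/2` and
`(q,p)` with `0 < |q| ≤ 1` and `H_R(q,p) = −(c + 1/(2c²))`, one has
`|q| ≤ 1/c` and `H_H(q,p) ≤ −c`. -/
theorem rotating_kepler_in_hill (c : ℝ) (hc : (3:ℝ) ^ ((4:ℝ)/3) / 2 ≤ c)
    (q p : ℝ × ℝ) (hq0 : 0 < Real.sqrt (q.1^2 + q.2^2))
    (hq1 : Real.sqrt (q.1^2 + q.2^2) ≤ 1)
    (hH : HR (q, p) = -(c + 1/(2*c^2))) :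
    Real.sqrt (q.1^2 + q.2^2) ≤ 1/c ∧ HH (q, p) ≤ -c := by
  set r := Real.sqrt (q.1^2 + q.2^2) with hr
  have hr2 : r^2 = q.1^2 + q.2^2 := Real.sq_sqrt (by positivity)
  -- c > 3/2
  have h3 : (3:ℝ) < (3:ℝ) ^ ((4:ℝ)/3) := by
    have := Real.rpow_lt_rpow_of_exponent_lt (x := 3) (by norm_num)
      (show (1:ℝ) < 4/3 by norm_num)
    simpa using this
  have hc1 : (3:ℝ)/2 < c := by linarith
  have hcpos : 0 < c := by linarith
  -- key inequality from the completed square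
  have hHR : (1/2) * (p.1^2 + p.2^2) - 1 / r + q.1 * p.2 - q.2 * p.1
      = -(c + 1/(2*c^2)) := hH
  have key : c + 1/(2*c^2) ≤ 1/r + r^2/2 := by
    nlinarith [sq_nonneg (p.1 - q.2), sq_nonneg (p.2 + q.1), hr2]
  have hrinv : r * (1/r) = 1 := mul_one_div_cancel (ne_of_gt hq0)
  have hcinv : c * (1/c) = 1 := mul_one_div_cancel (ne_of_gt hcpos)
  -- polynomial form of key: multiply by 2 r c²
  have key' : (2*c^3 + 1)/(2*c^2) ≤ (2 + r^3)/(2*r) := by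
    have e1 : c + 1/(2*c^2) = (2*c^3+1)/(2*c^2) := by
      field_simp
    have e2 : 1/r + r^2/2 = (2 + r^3)/(2*r) := by
      field_simp
    rw [e1, e2] at key; exact key
  rw [div_le_div_iff₀ (by positivity) (by positivity)] at key'
  have hpoly : 2*c^3*r + r ≤ 2*c^2 + c^2*r^3 := by nlinarith [key']
  have hrc : r ≤ 1/c := by
    by_contra hlt
    push_neg at hlt
    have hs : 1 < c * r := by
      have := mul_lt_mul_of_pos_left hlt hcpos
      rwa [hcinv] at this
    have hsecond : 0 < 2*c^2 - c*r^2 - r := by nlinarith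
    nlinarith [mul_pos (by linarith : (0:ℝ) < c*r - 1) hsecond]
  refine ⟨hrc, ?_⟩
  have hr2c : r^2 ≤ (1/c)^2 := pow_le_pow_left₀ hq0.le hrc 2
  have hq2 : q.2^2 ≤ (1/c)^2 := by nlinarith [sq_nonneg q.1]
  have hHH : HH (q, p) = -(c + 1/(2*c^2)) - q.1^2 + (1/2) * q.2^2 := by
    simp only [HH, hH]
  rw [hHH]
  have e3 : 1/(2*c^2) = (1/c)^2/2 := by
    field_simp
  rw [e3]; nlinarith [sq_nonneg q.1, hq2]
end
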